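/- arXiv:1405.1927 — 8 statements merged into one kernel-verified Lean document; each statement's English description precedes it below -/
import Mathlib

section
/- An additive functor F : A → B between additive categories satisfies both conditions (WSM) and (I) if and only if it satisfies condition (SM). -/
open CategoryTheory CategoryTheory.Limits

/-- An additive functor satisfies (WSM) and (I) iff it satisfies (SM). -/
theorem stmt3 {A B : Type*} [Category A] [Category B] [Preadditive A] [Preadditive B]
    (F : A ⥤ B) [F.Additive] :
    ((∀ (X Y : A) (u : X ⟶ Y), IsSplitMono (F.map u) →
        ∃ (X' : A) (u' : Y ⟶ X'), IsIso (F.map (u ≫ u'))) ∧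
      (∀ (X Y : A) (u : X ⟶ Y), IsIso (F.map u) →
        ∃ u' : Y ⟶ X, F.map u ≫ F.map u' = 𝟙 (F.obj X) ∧
          F.map u' ≫ F.map u = 𝟙 (F.obj Y))) ↔
    (∀ (X Y : A) (u : X ⟶ Y), IsSplitMono (F.map u) →
        ∃ u' : Y ⟶ X, F.map (u ≫ u') = 𝟙 (F.obj X)) := by
  constructor
  · rintro ⟨hWSM, hI⟩ X Y u hu
    obtain ⟨X', u', hiso⟩ := hWSM X Y u hu
    obtain ⟨v, hv1, hv2⟩ := hI X X' (u ≫ u') hiso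
    refine ⟨u' ≫ v, ?_⟩
    have : F.map (u ≫ u' ≫ v) = F.map (u ≫ u') ≫ F.map v := by
      rw [← F.map_comp, Category.assoc]
    rw [this, hv1]
  · intro hSM
    constructor
    · intro X Y u hu
      obtain ⟨u', hu'⟩ := hSM X Y u hu
      exact ⟨X, u', by rw [hu']; infer_instance⟩
    · intro X Y u hu
      have : IsSplitMono (F.map u) := ⟨⟨⟨inv (F.map u), by simp⟩⟩⟩
      obtain ⟨u', hu'⟩ := hSM X Y u this
      rw [F.map_comp] at hu'
      refine ⟨u', hu', ?_⟩
      have := hu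
      calc F.map u' ≫ F.map u
          = inv (F.map u) ≫ (F.map u ≫ F.map u') ≫ F.map u := by simp
        _ = 𝟙 (F.obj Y) := by rw [hu']; simp
end

section
/- A triangle functor F : A → B between triangulated categories is faithful if and only if it reflects split monomorphisms; i.e., F is faithful iff whenever F(u) is a split monomorphism in B, the morphism u is already a split monomorphism in A. -/
/-!
In a distinguished triangle `X ⟶ Y ⟶ Z ⟶ X⟦1⟧` the second morphism is split mono iff the first
one vanishes, and a triangle functor preserves distinguished triangles. If `F` is faithful and
`F.map u` is split mono, put `u` second in a triangle: `F` kills the first morphism, so it is zero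
and `u` is split mono. Conversely, if `F.map d = 0`, put `d` first: `F` maps the second morphism to
a split mono, so by reflection it is split mono itself and `d = 0`.
-/

open CategoryTheory CategoryTheory.Limits CategoryTheory.Pretriangulated

namespace CategoryTheory

lemma Functor.faithful_of_map_eq_zero {C D : Type*} [Category C] [Category D]
    [Preadditive C] [Preadditive D] (F : C ⥤ D) [F.Additive]
    (hF : ∀ ⦃X Y : C⦄ (f : X ⟶ Y), F.map f = 0 → f = 0) : F.Faithful :=
  ⟨fun {_ _} f g h => sub_eq_zero.1 (hF _ (by rw [F.map_sub, h, sub_self]))⟩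

variable {C D : Type*} [Category C] [Category D] [Preadditive C] [Preadditive D]
  [HasZeroObject C] [HasZeroObject D] [HasShift C ℤ] [HasShift D ℤ]
  [∀ n : ℤ, (CategoryTheory.shiftFunctor C n).Additive]
  [∀ n : ℤ, (CategoryTheory.shiftFunctor D n).Additive]
  [Pretriangulated C] [Pretriangulated D]

lemma Pretriangulated.Triangle.mor₁_eq_zero_iff_isSplitMono₂ (T : Triangle C)
    (hT : T ∈ distTriang C) : T.mor₁ = 0 ↔ IsSplitMono T.mor₂ :=
  (T.mor₁_eq_zero_iff_mono₂ hT).trans ⟨fun _ => isSplitMono_of_mono _, fun _ => inferInstance⟩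

lemma Functor.map_mor₁_eq_zero_iff_isSplitMono_map_mor₂ (F : C ⥤ D) [F.CommShift ℤ]
    [F.IsTriangulated] (T : Triangle C) (hT : T ∈ distTriang C) :
    F.map T.mor₁ = 0 ↔ IsSplitMono (F.map T.mor₂) :=
  (F.mapTriangle.obj T).mor₁_eq_zero_iff_isSplitMono₂ (F.map_distinguished T hT)

end CategoryTheory

universe v₁ v₂ u₁ u₂

variable {A : Type u₁} {B : Type u₂} [Category.{v₁} A] [Category.{v₂} B]
  [Preadditive A] [Preadditive B] [HasZeroObject A] [HasZeroObject B]
  [HasShift A ℤ] [HasShift B ℤ]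
  [∀ n : ℤ, (shiftFunctor A n).Additive] [∀ n : ℤ, (shiftFunctor B n).Additive]
  [Pretriangulated A] [Pretriangulated B] [IsTriangulated A] [IsTriangulated B]

/-- A triangle functor is faithful iff it reflects split monomorphisms (RSM). -/
theorem stmt4 (F : A ⥤ B) [F.CommShift ℤ] [F.IsTriangulated] :
    F.Faithful ↔
      ∀ (X Y : A) (u : X ⟶ Y), IsSplitMono (F.map u) → IsSplitMono u := by
  constructor
  · intro _ X Y u hu
    obtain ⟨W, f, h, hT⟩ := distinguished_cocone_triangle₁ u
    have hFf : F.map f = 0 := (F.map_mor₁_eq_zero_iff_isSplitMono_map_mor₂ _ hT).2 hu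
    exact ((Triangle.mk f u h).mor₁_eq_zero_iff_isSplitMono₂ hT).1 (F.map_eq_zero_iff.1 hFf)
  · intro hRSM
    refine F.faithful_of_map_eq_zero fun X Y d hd => ?_
    obtain ⟨Z, v, w, hT⟩ := distinguished_cocone_triangle d
    have hv : IsSplitMono v :=
      hRSM _ _ v ((F.map_mor₁_eq_zero_iff_isSplitMono_map_mor₂ _ hT).1 hd)
    exact ((Triangle.mk d v w).mor₁_eq_zero_iff_isSplitMono₂ hT).2 hv
end

section
/- For a triangle functor F : A → B between triangulated categories, if F satisfies condition (WSM) then F is objective: every morphism w with F(w) = 0 factors through an object K with F(K) ≅ 0. -/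
open CategoryTheory CategoryTheory.Limits CategoryTheory.Pretriangulated

universe v₁ v₂ u₁ u₂

variable {A : Type u₁} {B : Type u₂} [Category.{v₁} A] [Category.{v₂} B]
  [Preadditive A] [Preadditive B] [HasZeroObject A] [HasZeroObject B]
  [HasShift A ℤ] [HasShift B ℤ]
  [∀ n : ℤ, (shiftFunctor A n).Additive] [∀ n : ℤ, (shiftFunctor B n).Additive]
  [Pretriangulated A] [Pretriangulated B] [IsTriangulated A] [IsTriangulated B]

/-! If `F(w) = 0` for `w : Z ⟶ X⟦1⟧`, then in the triangle `X ⟶ Y ⟶ Z ⟶ X⟦1⟧` on `w` the image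
`F(u)` of `u : X ⟶ Y` is a split monomorphism. (WSM) gives `u'` with `F(u ≫ u')` invertible, so
the cone `K` of `u ≫ u'` satisfies `F(K) ≅ 0`, and the morphism of triangles extending
`(𝟙 X, u')` factors `w` through `K`. -/

section

omit [IsTriangulated A] [IsTriangulated B]

lemma Pretriangulated.exists_mor₃_eq_comp_of_distTriang_comp {X Y Z X' K : A}
    {u : X ⟶ Y} {v : Y ⟶ Z} {w : Z ⟶ X⟦(1 : ℤ)⟧} (hT : Triangle.mk u v w ∈ distTriang A)
    (u' : Y ⟶ X') {p : X' ⟶ K} {q : K ⟶ X⟦(1 : ℤ)⟧}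
    (hT' : Triangle.mk (u ≫ u') p q ∈ distTriang A) :
    ∃ g : Z ⟶ K, w = g ≫ q := by
  obtain ⟨g, -, hg⟩ := complete_distinguished_triangle_morphism _ _ hT hT' (𝟙 X) u'
    (Category.id_comp _).symm
  exact ⟨g, by simpa [Triangle.mk] using hg⟩

variable (F : A ⥤ B) [F.CommShift ℤ] [F.IsTriangulated]

lemma isSplitMono_map_mor₁_of_map_mor₃_eq_zero (T : Triangle A) (hT : T ∈ distTriang A)
    (h : F.map T.mor₃ = 0) : IsSplitMono (F.map T.mor₁) :=
  have : Mono (F.map T.mor₁) :=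
    Triangle.mono₁ _ (F.map_distinguished T hT) (by
      show F.map T.mor₃ ≫ _ = 0
      rw [h, zero_comp])
  isSplitMono_of_mono _

lemma isZero_map_obj₃_of_isIso_map_mor₁ (T : Triangle A) (hT : T ∈ distTriang A)
    (h : IsIso (F.map T.mor₁)) : IsZero (F.obj T.obj₃) :=
  Triangle.isZero₃_of_isIso₁ _ (F.map_distinguished T hT) h

lemma exists_factorization_of_map_eq_zero_of_shift
    (hWSM : ∀ (X Y : A) (u : X ⟶ Y), IsSplitMono (F.map u) →
      ∃ (X' : A) (u' : Y ⟶ X'), IsIso (F.map (u ≫ u')))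
    {X Z : A} (w : Z ⟶ X⟦(1 : ℤ)⟧) (hw : F.map w = 0) :
    ∃ (K : A) (g : Z ⟶ K) (h : K ⟶ X⟦(1 : ℤ)⟧), IsZero (F.obj K) ∧ w = g ≫ h := by
  obtain ⟨Y, u, v, hT⟩ := distinguished_cocone_triangle₂ w
  obtain ⟨X', u', hiso⟩ :=
    hWSM X Y u (isSplitMono_map_mor₁_of_map_mor₃_eq_zero F _ hT hw)
  obtain ⟨K, p, q, hT'⟩ := distinguished_cocone_triangle (u ≫ u')
  obtain ⟨g, hg⟩ := Pretriangulated.exists_mor₃_eq_comp_of_distTriang_comp hT u' hT'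
  exact ⟨K, g, q, isZero_map_obj₃_of_isIso_map_mor₁ F _ hT' hiso, hg⟩

end

/-- If a triangle functor satisfies (WSM), then it is objective. -/
theorem stmt8 (F : A ⥤ B) [F.CommShift ℤ] [F.IsTriangulated]
    (hWSM : ∀ (X Y : A) (u : X ⟶ Y), IsSplitMono (F.map u) →
      ∃ (X' : A) (u' : Y ⟶ X'), IsIso (F.map (u ≫ u'))) :
    ∀ (Z W : A) (w : Z ⟶ W), F.map w = 0 →
      ∃ (K : A) (g : Z ⟶ K) (h : K ⟶ W), IsZero (F.obj K) ∧ w = g ≫ h := by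
  intro Z W w hw
  let e : W⟦(-1 : ℤ)⟧⟦(1 : ℤ)⟧ ≅ W := (shiftFunctorCompIsoId A (-1 : ℤ) 1 (by omega)).app W
  obtain ⟨K, g, h, hK, hfac⟩ :=
    exists_factorization_of_map_eq_zero_of_shift F hWSM (w ≫ e.inv) (by simp [hw])
  exact ⟨K, g, h ≫ e.hom, hK, by simp [← reassoc_of% hfac]⟩
end

section
/- For a triangle functor F : A → B, if F is objective then the induced functor F̃ : A/Ker(F) → B from the Verdier quotient by the kernel-on-objects subcategory is faithful. -/
/-!
A morphism of the Verdier quotient is a left fraction `Q a ≫ (Q s)⁻¹`, and `F̃` kills it exactly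
when `F` kills `a`. Objectivity makes such an `a` factor through an object of `Ker F`, and these
objects become zero in the quotient, so `Q a = 0`. An additive functor that reflects zero
morphisms is faithful.
-/

namespace CategoryTheory

open Limits Pretriangulated ZeroObject

variable {C D E : Type*} [Category C] [Category D] [Category E]

lemma Functor.faithful_of_map_eq_zero_of_essSurj [Preadditive D] [Preadditive E]
    (L : C ⥤ D) [L.EssSurj] (G : D ⥤ E) [G.Additive]
    (hG : ∀ ⦃X Y : C⦄ (φ : L.obj X ⟶ L.obj Y), G.map φ = 0 → φ = 0) : G.Faithful where
  map_injective {X' Y'} φ ψ hφψ := by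
    let eX := L.objObjPreimageIso X'
    let eY := L.objObjPreimageIso Y'
    have hzero : eX.hom ≫ (φ - ψ) ≫ eY.inv = 0 :=
      hG _ (by simp only [Functor.map_comp, Functor.map_sub, hφψ, sub_self, zero_comp, comp_zero])
    rw [← sub_eq_zero, ← cancel_epi eX.hom, ← cancel_mono eY.inv]
    simpa only [zero_comp, comp_zero, Category.assoc] using hzero

lemma Localization.eq_zero_of_map_eq_zero [HasZeroMorphisms D] [HasZeroMorphisms E]
    (L : C ⥤ D) (W : MorphismProperty C) [L.IsLocalization W] [W.HasLeftCalculusOfFractions]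
    (G : D ⥤ E) [G.PreservesZeroMorphisms]
    (hLG : ∀ ⦃X Y : C⦄ (f : X ⟶ Y), G.map (L.map f) = 0 → L.map f = 0)
    ⦃X Y : C⦄ (φ : L.obj X ⟶ L.obj Y) (hφ : G.map φ = 0) : φ = 0 := by
  obtain ⟨α, rfl⟩ := Localization.exists_leftFraction L W φ
  have hf : L.map α.f = α.map L (Localization.inverts L W) ≫ L.map α.s :=
    (α.map_comp_map_s L (Localization.inverts L W)).symm
  have hLf : L.map α.f = 0 := hLG _ (by rw [hf, Functor.map_comp, hφ, zero_comp])
  rw [← cancel_mono (L.map α.s), ← hf, hLf, zero_comp]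

lemma ObjectProperty.isZero_obj_of_isInvertedBy_trW [Preadditive C] [HasZeroObject C]
    [HasShift C ℤ] [∀ n : ℤ, (shiftFunctor C n).Additive] [Pretriangulated C]
    (P : ObjectProperty C) [HasZeroMorphisms D] (L : C ⥤ D) [L.PreservesZeroMorphisms]
    (hL : P.trW.IsInvertedBy L) {X : C} (hX : P X) : IsZero (L.obj X) := by
  -- the cone of `0 ⟶ X` is `X`
  have : IsIso (L.map (0 : 0 ⟶ X)) :=
    hL _ (ObjectProperty.trW.mk P (contractible_distinguished₁ X) hX)
  exact (L.map_isZero (isZero_zero C)).of_iso (asIso (L.map (0 : 0 ⟶ X))).symm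

end CategoryTheory

open CategoryTheory CategoryTheory.Limits CategoryTheory.Pretriangulated

universe v₁ v₂ u₁ u₂

variable {A : Type u₁} {B : Type u₂} [Category.{v₁} A] [Category.{v₂} B]
  [Preadditive A] [Preadditive B] [HasZeroObject A] [HasZeroObject B]
  [HasShift A ℤ] [HasShift B ℤ]
  [∀ n : ℤ, (shiftFunctor A n).Additive] [∀ n : ℤ, (shiftFunctor B n).Additive]
  [Pretriangulated A] [Pretriangulated B] [IsTriangulated A] [IsTriangulated B]

/-- If a triangle functor `F` is objective, then the induced functor
`F̃ : A/Ker F ⟶ B` on the Verdier quotient by the subcategory of objects killed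
by `F` is faithful. -/
theorem stmt9 (F : A ⥤ B) [F.CommShift ℤ] [F.IsTriangulated]
    (S : ObjectProperty A) [S.IsTriangulated] (hS : ∀ X : A, S X ↔ IsZero (F.obj X))
    (Ft : S.trW.Localization ⥤ B) (e : S.trW.Q ⋙ Ft ≅ F)
    (hobj : ∀ (X Y : A) (f : X ⟶ Y), F.map f = 0 →
      ∃ (K : A) (g : X ⟶ K) (h : K ⟶ Y), IsZero (F.obj K) ∧ f = g ≫ h) :
    Ft.Faithful := by
  have : Ft.Additive := by
    rw [Localization.functor_additive_iff S.trW.Q S.trW Ft]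
    exact Functor.additive_of_iso e.symm
  have hQ : ∀ ⦃X Y : A⦄ (f : X ⟶ Y), Ft.map (S.trW.Q.map f) = 0 → S.trW.Q.map f = 0 := by
    intro X Y f hf
    have hFf : F.map f = 0 := by
      rw [← NatIso.naturality_1 e f, Functor.comp_map, hf, zero_comp, comp_zero]
    obtain ⟨K, g, h, hK, rfl⟩ := hobj X Y f hFf
    have hQK : IsZero (S.trW.Q.obj K) := S.isZero_obj_of_isInvertedBy_trW S.trW.Q
      (Localization.inverts _ _) ((hS K).2 hK)
    rw [Functor.map_comp, hQK.eq_of_tgt (S.trW.Q.map g) 0, zero_comp]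
  exact Functor.faithful_of_map_eq_zero_of_essSurj S.trW.Q Ft
    (Localization.eq_zero_of_map_eq_zero S.trW.Q S.trW Ft hQ)
end

section
/- For a triangle functor F : A → B, if the induced functor F̃ : A/Ker(F) → B is faithful, then F satisfies condition (WSM). -/
open CategoryTheory CategoryTheory.Limits CategoryTheory.Pretriangulated

universe v₁ v₂ u₁ u₂

namespace CategoryTheory.Triangulated

variable (C : Type*) [Category C] [HasZeroObject C] [HasShift C ℤ] [Preadditive C]
  [∀ n : ℤ, (shiftFunctor C n).Additive] [Pretriangulated C]

/-- The structure `Triangulated.Subcategory` as it was in Mathlib (December 2024),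
removed since in favour of `ObjectProperty.IsTriangulated`. -/
structure Subcategory where
  P : C → Prop
  zero' : ∃ (Z : C) (_ : IsZero Z), P Z
  shift (X : C) (n : ℤ) : P X → P (X⟦n⟧)
  ext₂' (T : Triangle C) (_ : T ∈ distTriang C) : P T.obj₁ → P T.obj₃ →
    ObjectProperty.isoClosure P T.obj₂

variable {C}

/-- The class of morphisms whose cone belongs to `S` (old `Subcategory.W`). -/
def Subcategory.W (S : Subcategory C) : MorphismProperty C :=
  fun X Y f => ∃ (Z : C) (g : Y ⟶ Z) (h : Z ⟶ X⟦(1 : ℤ)⟧)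
    (_ : Triangle.mk f g h ∈ distTriang C), S.P Z

end CategoryTheory.Triangulated


variable {A : Type u₁} {B : Type u₂} [Category.{v₁} A] [Category.{v₂} B]
  [Preadditive A] [Preadditive B] [HasZeroObject A] [HasZeroObject B]
  [HasShift A ℤ] [HasShift B ℤ]
  [∀ n : ℤ, (shiftFunctor A n).Additive] [∀ n : ℤ, (shiftFunctor B n).Additive]
  [Pretriangulated A] [Pretriangulated B] [IsTriangulated A] [IsTriangulated B]

/-! Since `F̃` is faithful, `V_F(u)` is a monomorphism in the triangulated
category `A/Ker F`, hence split. Writing its retraction as a left fraction `V_F(s)⁻¹ ∘ V_F(u')`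
gives `V_F(u' ∘ u) = V_F(s)`, an isomorphism, and applying `F̃` shows that `F(u' ∘ u)` is one. -/

namespace CategoryTheory

variable {C D E : Type*} [Category C] [Category D] [Category E]

lemma mono_map_of_faithful_of_iso {L : C ⥤ D} {G : D ⥤ E} {F : C ⥤ E}
    (e : L ⋙ G ≅ F) [G.Faithful] {X Y : C} (u : X ⟶ Y) [Mono (F.map u)] :
    Mono (L.map u) := by
  apply G.mono_of_mono_map
  rw [← Functor.comp_map, ← NatIso.naturality_2 e u]
  infer_instance

lemma Localization.exists_isIso_map_comp_of_isSplitMono (L : C ⥤ D) (W : MorphismProperty C)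
    [L.IsLocalization W] [W.HasLeftCalculusOfFractions] {X Y : C} (u : X ⟶ Y)
    [IsSplitMono (L.map u)] : ∃ (X' : C) (u' : Y ⟶ X'), IsIso (L.map (u ≫ u')) := by
  obtain ⟨φ, hφ⟩ := Localization.exists_leftFraction L W (retraction (L.map u))
  have := Localization.inverts L W φ.s φ.hs
  have hu : L.map (u ≫ φ.f) = L.map φ.s := by
    rw [L.map_comp, ← φ.map_comp_map_s L (Localization.inverts L W), ← hφ,
      IsSplitMono.id_assoc]
  exact ⟨φ.Y', φ.f, hu ▸ inferInstance⟩

namespace Triangulated.Subcategory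

variable [HasZeroObject C] [HasShift C ℤ] [Preadditive C]
  [∀ n : ℤ, (shiftFunctor C n).Additive] [Pretriangulated C] (S : Subcategory C)

instance isTriangulated_P : ObjectProperty.IsTriangulated (S.P : ObjectProperty C) where
  exists_zero := let ⟨Z, hZ, hP⟩ := S.zero'; ⟨Z, hZ, hP⟩
  isStableUnderShiftBy n := ⟨fun X => S.shift X n⟩
  ext₂' := S.ext₂'

lemma W_eq_trW : S.W = ObjectProperty.trW (S.P : ObjectProperty C) := rfl

-- These make `S.W.Localization` pretriangulated, so that monomorphisms in it split.
instance [IsTriangulated C] : S.W.HasLeftCalculusOfFractions :=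
  S.W_eq_trW ▸ inferInstance

instance [IsTriangulated C] : S.W.IsCompatibleWithTriangulation :=
  S.W_eq_trW ▸ inferInstance

end Triangulated.Subcategory

end CategoryTheory

theorem stmt10_general (F : A ⥤ B)
    (S : Triangulated.Subcategory A)
    (Ft : S.W.Localization ⥤ B) (e : S.W.Q ⋙ Ft ≅ F) (hFt : Ft.Faithful) :
    ∀ (X Y : A) (u : X ⟶ Y), IsSplitMono (F.map u) →
      ∃ (X' : A) (u' : Y ⟶ X'), IsIso (F.map (u ≫ u')) := by
  intro X Y u _
  have : Mono (S.W.Q.map u) := mono_map_of_faithful_of_iso e u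
  have : IsSplitMono (S.W.Q.map u) := isSplitMono_of_mono _
  obtain ⟨X', u', hu'⟩ := Localization.exists_isIso_map_comp_of_isSplitMono S.W.Q S.W u
  exact ⟨X', u', (NatIso.isIso_map_iff e _).1 (Ft.map_isIso _)⟩

/-- If the induced functor `F̃ : A/Ker F ⟶ B` on the Verdier quotient is faithful,
then the triangle functor `F` satisfies condition (WSM). -/
theorem stmt10 (F : A ⥤ B) [F.CommShift ℤ] [F.IsTriangulated]
    (S : Triangulated.Subcategory A) (hS : ∀ X : A, S.P X ↔ IsZero (F.obj X))
    (Ft : S.W.Localization ⥤ B) (e : S.W.Q ⋙ Ft ≅ F) (hFt : Ft.Faithful) :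
    ∀ (X Y : A) (u : X ⟶ Y), IsSplitMono (F.map u) →
      ∃ (X' : A) (u' : Y ⟶ X'), IsIso (F.map (u ≫ u')) :=
  stmt10_general F S Ft e hFt
end

section
/- Every full triangle functor between triangulated categories is objective. -/
/-!
Complete `f` to a distinguished triangle `Z ⟶ X ⟶ Y`. As `F f = 0`, the identity of `F X`
factors through `F (Z ⟶ X)`, and fullness lifts this to an endomorphism `e` of `X` with
`F e = 𝟙` and `e ≫ f = 0`. The cone `K` of `e` satisfies `F K ≅ 0` because `F e` is an
isomorphism, and `f` factors through `X ⟶ K` because `e ≫ f = 0`.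
-/

open CategoryTheory CategoryTheory.Limits CategoryTheory.Pretriangulated

namespace CategoryTheory.Functor

variable {C D : Type*} [Category C] [Category D] [Preadditive C] [Preadditive D]
  [HasZeroObject C] [HasZeroObject D] [HasShift C ℤ] [HasShift D ℤ]
  [∀ n : ℤ, (shiftFunctor C n).Additive] [∀ n : ℤ, (shiftFunctor D n).Additive]
  [Pretriangulated C] [Pretriangulated D] (F : C ⥤ D) [F.CommShift ℤ] [F.IsTriangulated]

lemma isZero_obj₃_of_isIso_map_mor₁ {T : Triangle C} (hT : T ∈ distTriang C)
    (h : IsIso (F.map T.mor₁)) : IsZero (F.obj T.obj₃) :=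
  Triangle.isZero₃_of_isIso₁ _ (F.map_distinguished T hT) h

lemma exists_map_eq_id_and_comp_eq_zero [F.Full] {X Y : C} (f : X ⟶ Y) (hf : F.map f = 0) :
    ∃ e : X ⟶ X, F.map e = 𝟙 (F.obj X) ∧ e ≫ f = 0 := by
  obtain ⟨Z, u, w, hT⟩ := distinguished_cocone_triangle₁ f
  obtain ⟨t, ht⟩ := Triangle.coyoneda_exact₂ _ (F.map_distinguished _ hT) (𝟙 (F.obj X))
    ((Category.id_comp _).trans hf)
  obtain ⟨c, hc⟩ : ∃ c : X ⟶ Z, F.map c = t := F.map_surjective t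
  refine ⟨c ≫ u, by rw [F.map_comp, hc]; exact ht.symm, ?_⟩
  rw [Category.assoc, show u ≫ f = 0 from comp_distTriang_mor_zero₁₂ _ hT, comp_zero]

lemma exists_factorization_through_isZero_obj {X Y : C} (f : X ⟶ Y) (e : X ⟶ X)
    (he : IsIso (F.map e)) (hef : e ≫ f = 0) :
    ∃ (K : C) (g : X ⟶ K) (h : K ⟶ Y), IsZero (F.obj K) ∧ f = g ≫ h := by
  obtain ⟨K, p, q, hT⟩ := distinguished_cocone_triangle e
  obtain ⟨h, rfl⟩ := Triangle.yoneda_exact₂ _ hT f hef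
  exact ⟨K, p, h, F.isZero_obj₃_of_isIso_map_mor₁ hT he, rfl⟩

end CategoryTheory.Functor

universe v₁ v₂ u₁ u₂

variable {A : Type u₁} {B : Type u₂} [Category.{v₁} A] [Category.{v₂} B]
  [Preadditive A] [Preadditive B] [HasZeroObject A] [HasZeroObject B]
  [HasShift A ℤ] [HasShift B ℤ]
  [∀ n : ℤ, (shiftFunctor A n).Additive] [∀ n : ℤ, (shiftFunctor B n).Additive]
  [Pretriangulated A] [Pretriangulated B] [IsTriangulated A] [IsTriangulated B]

/-- Every full triangle functor between triangulated categories is objective. -/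
theorem stmt12 (F : A ⥤ B) [F.CommShift ℤ] [F.IsTriangulated] [F.Full] :
    ∀ (X Y : A) (f : X ⟶ Y), F.map f = 0 →
      ∃ (K : A) (g : X ⟶ K) (h : K ⟶ Y), IsZero (F.obj K) ∧ f = g ≫ h := by
  intro X Y f hf
  obtain ⟨e, he, hef⟩ := F.exists_map_eq_id_and_comp_eq_zero f hf
  exact F.exists_factorization_through_isZero_obj f e (he ▸ inferInstance) hef
end

section
/- Let A be a Fitting category that is triangulated and F : A → B a triangle functor satisfying condition (I). Then the Verdier quotient functor V_F : A → A/Ker(F) is full. -/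
/-!
By the left calculus of fractions every morphism of the Verdier quotient `L : A ⥤ A/Ker F` is
`L f ≫ (L s)⁻¹` with `s` in the class `W` of morphisms whose cone lies in `Ker F`, so it suffices to
write `(L s)⁻¹` as `L t`. For `s ∈ W` the morphism `F s` is invertible, and condition (I) yields
`u'` with `F (u' ≫ s) = 𝟙`. Take a Fitting decomposition `u' ≫ s = b' ⊕ b''` on `X' ⊞ X''`: then
`F b''` is both nilpotent and the identity, so `F` kills `X''`, hence so does `L`. Therefore the
projection onto `X'`, followed by `b'⁻¹` and the inclusion, is a left inverse `c` of `u' ≫ s`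
after applying `L`, and `t := c ≫ u'` satisfies `L t ≫ L s = 𝟙`.
-/

open CategoryTheory CategoryTheory.Limits CategoryTheory.Pretriangulated

universe v₁ v₂ u₁ u₂

namespace CategoryTheory

section Fitting

variable {C D E : Type*} [Category C] [Category D] [Category E]

lemma Functor.map_eq_id_of_eq_conj_biprod_map [HasZeroMorphisms C] (F : C ⥤ D) {X X' X'' : C}
    [HasBinaryBiproduct X' X''] (e : X ≅ X' ⊞ X'') {b : X ⟶ X} {b₁ : X' ⟶ X'}
    {b₂ : X'' ⟶ X''} (hb : b = e.hom ≫ biprod.map b₁ b₂ ≫ e.inv)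
    (hFb : F.map b = 𝟙 (F.obj X)) : F.map b₂ = 𝟙 (F.obj X'') :=
  calc F.map b₂ = F.map ((biprod.inr ≫ e.inv) ≫ b ≫ e.hom ≫ biprod.snd) := by simp [hb]
    _ = F.map ((biprod.inr ≫ e.inv) ≫ e.hom ≫ biprod.snd) := by
      simp only [F.map_comp, hFb, Category.id_comp]
    _ = 𝟙 (F.obj X'') := by simp

variable [Preadditive C]

lemma Functor.isZero_obj_of_isNilpotent_of_map_eq_id [HasZeroMorphisms D] (F : C ⥤ D)
    [F.PreservesZeroMorphisms] {X : C} {a : End X} (ha : IsNilpotent a)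
    (hFa : F.map a = 𝟙 (F.obj X)) : IsZero (F.obj X) := by
  obtain ⟨n, hn⟩ := ha
  have hFa' : F.mapEnd X a = 1 := hFa
  rw [IsZero.iff_id_eq_zero]
  calc 𝟙 (F.obj X) = F.mapEnd X (a ^ n) := by rw [map_pow, hFa', one_pow]; rfl
    _ = F.map (0 : X ⟶ X) := by rw [hn]; rfl
    _ = 0 := F.map_zero X X

lemma Functor.map_biprod_fst_inl_eq_id [Preadditive E] (L : C ⥤ E) [L.Additive] {X X' X'' : C}
    [HasBinaryBiproduct X' X''] (e : X ≅ X' ⊞ X'') (hX'' : IsZero (L.obj X'')) :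
    L.map (e.hom ≫ biprod.fst ≫ biprod.inl ≫ e.inv) = 𝟙 (L.obj X) := by
  have hsnd : L.map (e.hom ≫ biprod.snd ≫ biprod.inr ≫ e.inv) = 0 := by
    rw [← Category.assoc, L.map_comp, hX''.eq_zero_of_src (L.map (biprod.inr ≫ e.inv)),
      Limits.comp_zero]
  calc L.map (e.hom ≫ biprod.fst ≫ biprod.inl ≫ e.inv)
      = L.map (e.hom ≫ biprod.fst ≫ biprod.inl ≫ e.inv)
        + L.map (e.hom ≫ biprod.snd ≫ biprod.inr ≫ e.inv) := by rw [hsnd, add_zero]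
    _ = L.map (e.hom ≫ (biprod.fst ≫ biprod.inl + biprod.snd ≫ biprod.inr) ≫ e.inv) := by
      simp only [Preadditive.add_comp, Preadditive.comp_add, L.map_add, Category.assoc]
    _ = 𝟙 (L.obj X) := by simp

def HasFittingDecomposition [HasBinaryBiproducts C] {X : C} (a : X ⟶ X) : Prop :=
  ∃ (X' X'' : C) (e : X ≅ X' ⊞ X'') (a' : X' ⟶ X') (a'' : X'' ⟶ X''),
    IsIso a' ∧ IsNilpotent (show End X'' from a'') ∧ a = e.hom ≫ biprod.map a' a'' ≫ e.inv

lemma HasFittingDecomposition.exists_map_comp_eq_id [HasBinaryBiproducts C] [HasZeroMorphisms D]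
    [Preadditive E] {X : C} {b : X ⟶ X} (hb : HasFittingDecomposition b) (F : C ⥤ D)
    [F.PreservesZeroMorphisms] (L : C ⥤ E) [L.Additive]
    (hFL : ∀ Y, IsZero (F.obj Y) → IsZero (L.obj Y)) (hFb : F.map b = 𝟙 (F.obj X)) :
    ∃ c : X ⟶ X, L.map (c ≫ b) = 𝟙 (L.obj X) := by
  obtain ⟨X', X'', e, b₁, b₂, _, hb₂, rfl⟩ := hb
  have hX'' : IsZero (L.obj X'') := hFL _ <| F.isZero_obj_of_isNilpotent_of_map_eq_id hb₂ <|
    F.map_eq_id_of_eq_conj_biprod_map e rfl hFb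
  refine ⟨e.hom ≫ biprod.fst ≫ inv b₁ ≫ biprod.inl ≫ e.inv, ?_⟩
  rw [← L.map_biprod_fst_inl_eq_id e hX'']
  simp [biprod.inl_map_assoc]

end Fitting

lemma Localization.full_of_exists_map_comp_eq_id {C D : Type*} [Category C] [Category D]
    (L : C ⥤ D) (W : MorphismProperty C) [L.IsLocalization W] [W.HasLeftCalculusOfFractions]
    (h : ∀ ⦃Y Y' : C⦄ (s : Y ⟶ Y'), W s → ∃ t : Y' ⟶ Y, L.map (t ≫ s) = 𝟙 (L.obj Y')) :
    L.Full where
  map_surjective {X Y} f := by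
    obtain ⟨φ, rfl⟩ := Localization.exists_leftFraction L W f
    obtain ⟨t, ht⟩ := h φ.s φ.hs
    have : IsIso (L.map φ.s) := Localization.inverts L W _ φ.hs
    have ht' : L.map t = inv (L.map φ.s) := IsIso.eq_inv_of_inv_hom_id (by rwa [← L.map_comp])
    exact ⟨φ.f ≫ t, by rw [L.map_comp, ht']; rfl⟩

section Triangulated

open ZeroObject

variable {C D : Type*} [Category C] [Category D] [Preadditive C] [Preadditive D]
  [HasZeroObject C] [HasZeroObject D] [HasShift C ℤ] [HasShift D ℤ]
  [∀ n : ℤ, (shiftFunctor C n).Additive] [∀ n : ℤ, (shiftFunctor D n).Additive]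
  [Pretriangulated C] [Pretriangulated D]

lemma ObjectProperty.isIso_map_of_trW (S : ObjectProperty C) (F : C ⥤ D) [F.CommShift ℤ]
    [F.IsTriangulated] (hS : ∀ X, S X → IsZero (F.obj X)) {X Y : C} {s : X ⟶ Y}
    (hs : S.trW s) : IsIso (F.map s) := by
  obtain ⟨Z, g, h, hT, hZ⟩ := hs
  exact (Triangle.isZero₃_iff_isIso₁ _ (F.map_distinguished _ hT)).1 (hS Z hZ)

lemma ObjectProperty.isZero_trW_Q_obj [IsTriangulated C] (S : ObjectProperty C)
    [S.IsTriangulated] {X : C} (hX : S X) : IsZero (S.trW.Q.obj X) := by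
  have : IsIso (S.trW.Q.map (0 : 0 ⟶ X)) :=
    Localization.inverts _ S.trW _ (ObjectProperty.trW.mk S (contractible_distinguished₁ X) hX)
  exact IsZero.of_iso (S.trW.Q.map_isZero (isZero_zero C)) (asIso (S.trW.Q.map 0)).symm

end Triangulated

end CategoryTheory

variable {A : Type u₁} {B : Type u₂} [Category.{v₁} A] [Category.{v₂} B]
  [Preadditive A] [Preadditive B] [HasZeroObject A] [HasZeroObject B]
  [HasShift A ℤ] [HasShift B ℤ]
  [∀ n : ℤ, (shiftFunctor A n).Additive] [∀ n : ℤ, (shiftFunctor B n).Additive]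
  [Pretriangulated A] [Pretriangulated B] [IsTriangulated A] [IsTriangulated B]

variable [HasBinaryBiproducts A]

/-- If the triangulated category `A` is a Fitting category and the triangle functor
`F` satisfies condition (I), then the Verdier quotient functor `V_F : A ⟶ A/Ker F`
is full. -/
theorem stmt16 (F : A ⥤ B) [F.CommShift ℤ] [F.IsTriangulated]
    (S : ObjectProperty A) [S.IsTriangulated] (hS : ∀ X : A, S X ↔ IsZero (F.obj X))
    (Ft : S.trW.Localization ⥤ B) (e : S.trW.Q ⋙ Ft ≅ F)
    (hFitting : ∀ (X : A) (a : X ⟶ X), ∃ (X' X'' : A) (e : X ≅ X' ⊞ X'')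
      (a' : X' ⟶ X') (a'' : X'' ⟶ X''), IsIso a' ∧ IsNilpotent (show CategoryTheory.End X'' from a'') ∧
        a = e.hom ≫ biprod.map a' a'' ≫ e.inv)
    (hI : ∀ (X Y : A) (u : X ⟶ Y), IsIso (F.map u) →
      ∃ u' : Y ⟶ X, F.map u ≫ F.map u' = 𝟙 (F.obj X) ∧
        F.map u' ≫ F.map u = 𝟙 (F.obj Y)) :
    S.trW.Q.Full := by
  refine Localization.full_of_exists_map_comp_eq_id _ S.trW fun Y Y' s hs => ?_
  obtain ⟨u', -, hu'⟩ := hI _ _ s (S.isIso_map_of_trW F (fun X => (hS X).1) hs)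
  obtain ⟨c, hc⟩ := HasFittingDecomposition.exists_map_comp_eq_id (hFitting Y' (u' ≫ s)) F S.trW.Q
    (fun X hX => S.isZero_trW_Q_obj ((hS X).2 hX)) (by rw [F.map_comp, hu'])
  exact ⟨c ≫ u', by simpa using hc⟩
end

section
/- For a triangle functor F : A → B, condition (SM) holds if and only if F factors as F = F₂ ∘ F₁ where F₁ is a full triangle functor and F₂ is a faithful triangle functor. Moreover in that case one may take F₁ full and dense (namely F₁ = V_F and F₂ = F̃). -/
/-!
A full functor into a triangulated category satisfies (SM), and so does its composite with a
faithful functor, because faithful functors reflect monomorphisms and every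
monomorphism of a triangulated category splits.

Conversely, assume (SM). If `F f = 0`, complete `f` to a triangle with `v : Y → Z`; then `F v` is
a split monomorphism, so (SM) yields `v' : Z → Y` with `F(v ≫ v')` invertible, and `f` factors
through the shifted cone of `v ≫ v'`, an object of `Ker F`. Hence `F f = F g` forces `f = g` in the
Verdier quotient, which makes `F̃` faithful; and a left fraction `V_F f ≫ (V_F s)⁻¹` with `F s`
invertible is the image of `f ≫ s'` for an (SM)-inverse `s'` of `s`, which makes `V_F` full.
-/

open CategoryTheory CategoryTheory.Limits CategoryTheory.Pretriangulated

universe v₁ v₂ u₁ u₂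

variable {A : Type u₁} {B : Type u₂} [Category.{v₁} A] [Category.{v₂} B]
  [Preadditive A] [Preadditive B] [HasZeroObject A] [HasZeroObject B]
  [HasShift A ℤ] [HasShift B ℤ]
  [∀ n : ℤ, (shiftFunctor A n).Additive] [∀ n : ℤ, (shiftFunctor B n).Additive]
  [Pretriangulated A] [Pretriangulated B] [IsTriangulated A] [IsTriangulated B]


/-- A factorization `F ≅ F₁ ⋙ F₂` of a triangle functor through a triangulated
category, with `F₁` a full triangle functor and `F₂` a faithful triangle functor. -/
structure TriangleFactorization (F : A ⥤ B) where
  Q : Type (max u₁ v₁)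
  [cat : Category.{max u₁ v₁} Q]
  [pre : Preadditive Q]
  [zq : HasZeroObject Q]
  [sh : HasShift Q ℤ]
  [shAdd : ∀ n : ℤ, (shiftFunctor Q n).Additive]
  [pt : Pretriangulated Q]
  F₁ : A ⥤ Q
  F₂ : Q ⥤ B
  [cs₁ : F₁.CommShift ℤ]
  [cs₂ : F₂.CommShift ℤ]
  [tr₁ : F₁.IsTriangulated]
  [tr₂ : F₂.IsTriangulated]
  full : F₁.Full
  faithful : F₂.Faithful
  iso : F₁ ⋙ F₂ ≅ F

/-- As above, with `F₁` moreover dense (essentially surjective). -/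
structure DenseTriangleFactorization (F : A ⥤ B) extends TriangleFactorization F where
  dense : F₁.EssSurj

namespace CategoryTheory

open ZeroObject

section Pretriangulated

variable {C : Type*} [Category C] [Preadditive C] [HasZeroObject C] [HasShift C ℤ]
  [∀ n : ℤ, (shiftFunctor C n).Additive] [Pretriangulated C]

instance ObjectProperty.isTriangulated_isZero :
    ObjectProperty.IsTriangulated (IsZero (C := C)) where
  exists_zero := ⟨0, isZero_zero C, isZero_zero C⟩
  isStableUnderShiftBy n := ⟨fun _ hX => (shiftFunctor C n).map_isZero hX⟩
  toIsTriangulatedClosed₂ := .mk' fun T hT h₁ h₃ => Triangle.isZero₂_of_isZero₁₃ T hT h₁ h₃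

lemma ObjectProperty.isZero_trW_iff {X Y : C} (f : X ⟶ Y) :
    ObjectProperty.trW (IsZero (C := C)) f ↔ IsIso f := by
  obtain ⟨Z, g, h, hT⟩ := distinguished_cocone_triangle f
  exact (ObjectProperty.trW_iff_of_distinguished _ _ hT).trans (Triangle.isZero₃_iff_isIso₁ _ hT)

lemma ObjectProperty.isZero_obj_of_isLocalization {E : Type*} [Category E] [HasZeroMorphisms E]
    (P : ObjectProperty C) [P.IsStableUnderShift ℤ] (L : C ⥤ E) [L.IsLocalization P.trW]
    [L.PreservesZeroMorphisms] {X : C} (hX : P X) : IsZero (L.obj X) :=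
  have : IsIso (L.map (0 : X ⟶ 0)) :=
    Localization.inverts L P.trW _ (ObjectProperty.trW.mk' _ (contractible_distinguished X) hX)
  (L.map_isZero (isZero_zero C)).of_iso (asIso (L.map (0 : X ⟶ 0)))

variable {D : Type*} [Category D] [Preadditive D] [HasZeroObject D] [HasShift D ℤ]
  [∀ n : ℤ, (shiftFunctor D n).Additive] [Pretriangulated D]
  (F : C ⥤ D) [F.CommShift ℤ] [F.IsTriangulated]

lemma ObjectProperty.kernel_trW_iff {X Y : C} (f : X ⟶ Y) :
    F.kernel.trW f ↔ IsIso (F.map f) := by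
  rw [ObjectProperty.inverseImage_trW_iff, ObjectProperty.isZero_trW_iff]

lemma ObjectProperty.kernel_trW_isInvertedBy : F.kernel.trW.IsInvertedBy F :=
  fun _ _ f hf => (ObjectProperty.kernel_trW_iff F f).1 hf

end Pretriangulated

def SM {C D : Type*} [Category C] [Category D] (F : C ⥤ D) : Prop :=
  ∀ (X Y : C) (u : X ⟶ Y), IsSplitMono (F.map u) → ∃ u' : Y ⟶ X, F.map (u ≫ u') = 𝟙 (F.obj X)

namespace SM

variable {C D : Type*} [Category C] [Category D] {F : C ⥤ D}

lemma of_comp_iso {Q : Type*} [Category Q] [SplitMonoCategory Q] {F₁ : C ⥤ Q} {F₂ : Q ⥤ D}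
    [F₁.Full] [F₂.Faithful] (e : F₁ ⋙ F₂ ≅ F) : SM F := by
  intro X Y u _
  have : Mono (F₂.map (F₁.map u)) := by
    rw [← Functor.comp_map, ← NatIso.naturality_2 e u]
    infer_instance
  have : Mono (F₁.map u) := F₂.mono_of_mono_map this
  have : IsSplitMono (F₁.map u) := isSplitMono_of_mono _
  refine ⟨F₁.preimage (retraction (F₁.map u)), ?_⟩
  rw [← NatIso.naturality_1 e, Functor.comp_map, F₁.map_comp, F₁.map_preimage,
    IsSplitMono.id]
  simp

lemma exists_comp_eq_id_of_isIso (hF : SM F) {X Y : C} (g : X ⟶ Y) [IsIso (F.map g)] :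
    ∃ g' : Y ⟶ X, F.map (g' ≫ g) = 𝟙 (F.obj Y) := by
  obtain ⟨g', hg'⟩ := hF X Y g inferInstance
  refine ⟨g', ?_⟩
  rw [F.map_comp] at hg' ⊢
  rw [← IsIso.inv_eq_of_hom_inv_id hg', IsIso.inv_hom_id]

section Pretriangulated

variable {C : Type*} [Category C] [Preadditive C] [HasZeroObject C] [HasShift C ℤ]
  [∀ n : ℤ, (shiftFunctor C n).Additive] [Pretriangulated C]
  {D : Type*} [Category D] [Preadditive D] [HasZeroObject D] [HasShift D ℤ]
  [∀ n : ℤ, (shiftFunctor D n).Additive] [Pretriangulated D]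

lemma of_triangleFactorization {F : C ⥤ D} (t : TriangleFactorization F) : SM F := by
  obtain ⟨Q, F₁, F₂, _, _, e⟩ := t
  exact of_comp_iso e

variable {F : C ⥤ D} [F.CommShift ℤ] [F.IsTriangulated]

lemma exists_factorization_through_kernel (hF : SM F) {X Y : C} (f : X ⟶ Y)
    (hf : F.map f = 0) : ∃ (M : C) (α : X ⟶ M) (β : M ⟶ Y), F.kernel M ∧ α ≫ β = f := by
  obtain ⟨Z, v, w, hT⟩ := distinguished_cocone_triangle f
  have : Mono (F.map v) := Triangle.mono₂ _ (F.map_distinguished _ hT) hf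
  obtain ⟨v', hv'⟩ := hF Y Z v (isSplitMono_of_mono _)
  obtain ⟨N, p, q, hT'⟩ := distinguished_cocone_triangle (v ≫ v')
  have hN : F.kernel N := (F.kernel.trW_iff_of_distinguished _ hT').1
    ((ObjectProperty.kernel_trW_iff F (v ≫ v')).2 (by rw [hv']; infer_instance))
  have hfv : f ≫ v = 0 := comp_distTriang_mor_zero₁₂ _ hT
  obtain ⟨α, hα⟩ := Triangle.coyoneda_exact₂ _ (inv_rot_of_distTriang _ hT') f
    (show f ≫ v ≫ v' = 0 by rw [reassoc_of% hfv, zero_comp])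
  exact ⟨N⟦(-1 : ℤ)⟧, α, _, F.kernel.le_shift (-1) N hN, hα.symm⟩

variable {E : Type*} [Category E] [Preadditive E] (L : C ⥤ E) [L.IsLocalization F.kernel.trW]
  [L.Additive]

lemma map_eq_map_of_localization (hF : SM F) {X Y : C} {f g : X ⟶ Y}
    (h : F.map f = F.map g) : L.map f = L.map g := by
  obtain ⟨M, α, β, hM, hfac⟩ := hF.exists_factorization_through_kernel (f - g)
    (by rw [F.map_sub, h, sub_self])
  rw [← sub_eq_zero, ← L.map_sub, ← hfac, L.map_comp,
    (F.kernel.isZero_obj_of_isLocalization L hM).eq_of_src (L.map β) 0, comp_zero]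

lemma full_of_localization [IsTriangulated C] (hF : SM F) : L.Full where
  map_surjective {X Y} φ := by
    obtain ⟨φ, rfl⟩ := Localization.exists_leftFraction L F.kernel.trW φ
    have : IsIso (F.map φ.s) := ObjectProperty.kernel_trW_isInvertedBy F _ φ.hs
    obtain ⟨s', hs'⟩ := hF.exists_comp_eq_id_of_isIso φ.s
    have := Localization.inverts L F.kernel.trW _ φ.hs
    refine ⟨φ.f ≫ s', ?_⟩
    rw [← cancel_mono (L.map φ.s), MorphismProperty.LeftFraction.map_comp_map_s, ← L.map_comp]
    apply hF.map_eq_map_of_localization L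
    rw [Category.assoc, F.map_comp, hs', Category.comp_id]

lemma faithful_of_localization [IsTriangulated C] (hF : SM F) {G : E ⥤ D} (e : L ⋙ G ≅ F) :
    G.Faithful := by
  have := hF.full_of_localization L
  have := Localization.essSurj L F.kernel.trW
  refine Functor.faithful_of_comp_essSurj G L fun X Y f g h => ?_
  obtain ⟨f, rfl⟩ := L.map_surjective f
  obtain ⟨g, rfl⟩ := L.map_surjective g
  apply hF.map_eq_map_of_localization L
  rw [← NatIso.naturality_1 e f, ← NatIso.naturality_1 e g, Functor.comp_map, Functor.comp_map, h]

end Pretriangulated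

attribute [local instance] uliftCategory in
noncomputable def denseTriangleFactorization (F : A ⥤ B) [F.CommShift ℤ] [F.IsTriangulated]
    (hF : SM F) : DenseTriangleFactorization F := by
  let W := F.kernel.trW
  -- `ULift` only raises the universe of objects to the one `TriangleFactorization` asks for.
  let Q := ULift.{v₁} W.Localization
  let L : A ⥤ Q := W.Q ⋙ ULift.equivalence.functor
  letI : Preadditive Q := Localization.preadditive L W
  haveI : L.Additive := Localization.functor_additive L W
  haveI : HasZeroObject Q := L.hasZeroObject_of_additive
  letI : HasShift Q ℤ := HasShift.localized L W ℤ
  letI : L.CommShift ℤ := Functor.CommShift.localized L W ℤ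
  haveI : ∀ n : ℤ, (shiftFunctor Q n).Additive := fun n => by
    rw [Localization.functor_additive_iff L W]
    exact Functor.additive_of_iso (L.commShiftIso n)
  letI : Pretriangulated Q := Triangulated.Localization.pretriangulated L W
  haveI : L.IsTriangulated := Triangulated.Localization.isTriangulated_functor L W
  let G : Q ⥤ B := Localization.lift F (ObjectProperty.kernel_trW_isInvertedBy F) L
  let e : L ⋙ G ≅ F := Localization.Lifting.iso L W F G
  letI : G.CommShift ℤ := Functor.commShiftOfLocalization L W ℤ F G
  haveI : L.mapArrow.EssSurj := Localization.essSurj_mapArrow L W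
  haveI : NatTrans.CommShift e.hom ℤ := NatTrans.commShift_iso_hom_of_localization L W ℤ F G
  haveI : G.IsTriangulated := Functor.isTriangulated_of_precomp_iso e
  exact
    { Q := Q
      F₁ := L
      F₂ := G
      full := hF.full_of_localization L
      faithful := hF.faithful_of_localization L e
      iso := e
      dense := Localization.essSurj L W }

end SM

end CategoryTheory

/-- A triangle functor satisfies (SM) iff it factors as a full triangle functor
followed by a faithful triangle functor; moreover in that case the first functor
may be chosen to be full and dense. -/
theorem stmt17 (F : A ⥤ B) [F.CommShift ℤ] [F.IsTriangulated] :
    ((∀ (X Y : A) (u : X ⟶ Y), IsSplitMono (F.map u) →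
        ∃ u' : Y ⟶ X, F.map (u ≫ u') = 𝟙 (F.obj X)) ↔
      Nonempty (TriangleFactorization F)) ∧
    ((∀ (X Y : A) (u : X ⟶ Y), IsSplitMono (F.map u) →
        ∃ u' : Y ⟶ X, F.map (u ≫ u') = 𝟙 (F.obj X)) →
      Nonempty (DenseTriangleFactorization F)) :=
  ⟨⟨fun hF => ⟨(SM.denseTriangleFactorization F hF).toTriangleFactorization⟩,
    fun ⟨t⟩ => SM.of_triangleFactorization t⟩,
   fun hF => ⟨SM.denseTriangleFactorization F hF⟩⟩
end
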